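/- arXiv:2601.18028 — 4 statements merged into one kernel-verified Lean document; each statement's English description precedes it below -/
import Mathlib

section
/- Let Φ : ℝ → [0,∞] be a convex function whose effective domain contains an open nonempty interval, and suppose Φ is even. Then for all real numbers u₀, u₁, v₀, v₁ with (u₀ − v₀)(u₁ − v₁) < 0, one has Φ(u₀ − v₁) + Φ(v₀ − u₁) ≤ Φ(u₀ − u₁) + Φ(v₀ − v₁). -/
open ENNReal

theorem stmt0 (Φ : ℝ → ℝ≥0∞)
    (hconv : ∀ x y a b : ℝ, 0 ≤ a → 0 ≤ b → a + b = 1 →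
      Φ (a * x + b * y) ≤ ENNReal.ofReal a * Φ x + ENNReal.ofReal b * Φ y)
    (hdom : ∃ a b : ℝ, a < b ∧ ∀ s ∈ Set.Ioo a b, Φ s < ⊤)
    (heven : ∀ s : ℝ, Φ (-s) = Φ s)
    (u₀ u₁ v₀ v₁ : ℝ) (h : (u₀ - v₀) * (u₁ - v₁) < 0) :
    Φ (u₀ - v₁) + Φ (v₀ - u₁) ≤ Φ (u₀ - u₁) + Φ (v₀ - v₁) := by
  set p := u₀ - v₀ with hp'
  set q := u₁ - v₁ with hq'
  have hne : p - q ≠ 0 := by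
    rcases mul_neg_iff.mp h with ⟨hp, hq⟩ | ⟨hp, hq⟩ <;> intro hc <;> nlinarith
  set t := p / (p - q) with ht'
  set s := -q / (p - q) with hs'
  have ht : 0 ≤ t := by
    rcases mul_neg_iff.mp h with ⟨hp, hq⟩ | ⟨hp, hq⟩
    · exact div_nonneg hp.le (by linarith)
    · exact div_nonneg_of_nonpos hp.le (by linarith)
  have hs : 0 ≤ s := by
    rcases mul_neg_iff.mp h with ⟨hp, hq⟩ | ⟨hp, hq⟩
    · exact div_nonneg (by linarith) (by linarith)
    · exact div_nonneg_of_nonpos (by linarith) (by linarith)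
  have hts : t + s = 1 := by
    rw [ht', hs']; field_simp; ring
  have hc : u₀ - v₁ = t * (u₀ - u₁) + s * (v₀ - v₁) := by
    rw [ht', hs']; field_simp; ring_nf; rw [hp', hq']; ring
  have hd : v₀ - u₁ = s * (u₀ - u₁) + t * (v₀ - v₁) := by
    rw [ht', hs']; field_simp; ring_nf; rw [hp', hq']; ring
  have h1 : Φ (u₀ - v₁) ≤ ENNReal.ofReal t * Φ (u₀ - u₁) + ENNReal.ofReal s * Φ (v₀ - v₁) := by
    rw [hc]; exact hconv _ _ _ _ ht hs hts
  have h2 : Φ (v₀ - u₁) ≤ ENNReal.ofReal s * Φ (u₀ - u₁) + ENNReal.ofReal t * Φ (v₀ - v₁) := by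
    rw [hd]; exact hconv _ _ _ _ hs ht (by linarith)
  have hone : ENNReal.ofReal t + ENNReal.ofReal s = 1 := by
    rw [← ENNReal.ofReal_add ht hs, hts, ENNReal.ofReal_one]
  calc Φ (u₀ - v₁) + Φ (v₀ - u₁)
      ≤ (ENNReal.ofReal t * Φ (u₀ - u₁) + ENNReal.ofReal s * Φ (v₀ - v₁)) +
        (ENNReal.ofReal s * Φ (u₀ - u₁) + ENNReal.ofReal t * Φ (v₀ - v₁)) := add_le_add h1 h2
    _ = (ENNReal.ofReal t + ENNReal.ofReal s) * Φ (u₀ - u₁) +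
        (ENNReal.ofReal t + ENNReal.ofReal s) * Φ (v₀ - v₁) := by ring
    _ = Φ (u₀ - u₁) + Φ (v₀ - v₁) := by rw [hone, one_mul, one_mul]
end

section
/- Let Φ : ℝ → [0,∞] be a convex even function with Φ finite on all of ℝ, and let p : ℝ → ℝ be a normal contraction (increasing, p(0) = 0, Lipschitz with constant ≤ 1). Then for all u₀, u₁, v₀, v₁ ∈ ℝ: Φ((u₀ − p(u₀ − v₀)) − (u₁ − p(u₁ − v₁))) + Φ((v₀ + p(u₀ − v₀)) − (v₁ + p(u₁ − v₁))) ≤ Φ(u₀ − u₁) + Φ(v₀ − v₁). -/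
theorem stmt1 (Φ : ℝ → ℝ) (hconv : ConvexOn ℝ Set.univ Φ)
    (hnonneg : ∀ s, 0 ≤ Φ s) (heven : ∀ s, Φ (-s) = Φ s)
    (p : ℝ → ℝ) (hmono : Monotone p) (hp0 : p 0 = 0) (hlip : LipschitzWith 1 p)
    (u₀ u₁ v₀ v₁ : ℝ) :
    Φ ((u₀ - p (u₀ - v₀)) - (u₁ - p (u₁ - v₁)))
      + Φ ((v₀ + p (u₀ - v₀)) - (v₁ + p (u₁ - v₁)))
      ≤ Φ (u₀ - u₁) + Φ (v₀ - v₁) := by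
  set a := u₀ - u₁ with ha
  set b := v₀ - v₁ with hb
  set δ := p (u₀ - v₀) - p (u₁ - v₁) with hδ
  have hlipR := hlip.dist_le_mul (u₀ - v₀) (u₁ - v₁)
  rw [Real.dist_eq, Real.dist_eq, NNReal.coe_one, one_mul] at hlipR
  have hst : (u₀ - v₀) - (u₁ - v₁) = a - b := by rw [ha, hb]; ring
  rw [← hδ, hst] at hlipR
  -- hlipR : |δ| ≤ |a - b|
  -- δ has the same sign as a - b
  have hsign : 0 ≤ δ * (a - b) := by
    rcases le_total (u₁ - v₁) (u₀ - v₀) with h | h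
    · have h1 : 0 ≤ δ := by have := hmono h; rw [hδ]; linarith
      have h2 : 0 ≤ a - b := by rw [← hst]; linarith
      exact mul_nonneg h1 h2
    · have h1 : δ ≤ 0 := by have := hmono h; rw [hδ]; linarith
      have h2 : a - b ≤ 0 := by rw [← hst]; linarith
      nlinarith
  obtain ⟨l, hl0, hl1, hld⟩ : ∃ l : ℝ, 0 ≤ l ∧ l ≤ 1 ∧ δ = l * (a - b) := by
    rcases eq_or_ne a b with hab | hab
    · refine ⟨0, le_refl _, zero_le_one, ?_⟩
      have h0 : |δ| ≤ 0 := by simpa [hab] using hlipR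
      simp [abs_nonpos_iff.mp h0]
    · have hne : a - b ≠ 0 := sub_ne_zero.mpr hab
      refine ⟨δ / (a - b), ?_, ?_, by field_simp⟩
      · have e : δ / (a - b) = (δ * (a - b)) / (a - b) ^ 2 := by
          field_simp
        rw [e]; exact div_nonneg hsign (sq_nonneg _)
      · calc δ / (a - b) ≤ |δ / (a - b)| := le_abs_self _
          _ = |δ| / |a - b| := abs_div δ (a - b)
          _ ≤ 1 := by
              rw [div_le_one (abs_pos.mpr hne)]; exact hlipR
  have key1 : Φ (a - δ) ≤ (1 - l) * Φ a + l * Φ b := by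
    have h := hconv.2 (Set.mem_univ a) (Set.mem_univ b)
      (by linarith : (0:ℝ) ≤ 1 - l) hl0 (by ring)
    simp only [smul_eq_mul] at h
    rw [show (1-l)*a + l*b = a - δ from by rw [hld]; ring] at h
    exact h
  have key2 : Φ (b + δ) ≤ l * Φ a + (1 - l) * Φ b := by
    have h := hconv.2 (Set.mem_univ a) (Set.mem_univ b)
      hl0 (by linarith : (0:ℝ) ≤ 1 - l) (by ring)
    simp only [smul_eq_mul] at h
    rw [show l*a + (1-l)*b = b + δ from by rw [hld]; ring] at h
    exact h
  have e1 : (u₀ - p (u₀ - v₀)) - (u₁ - p (u₁ - v₁)) = a - δ := by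
    rw [ha, hδ]; ring
  have e2 : (v₀ + p (u₀ - v₀)) - (v₁ + p (u₁ - v₁)) = b + δ := by
    rw [hb, hδ]; ring
  rw [e1, e2]
  linarith
end

section
/- Let p, r ∈ [2,∞) and z, t ∈ ℝ with z ≥ t. Then (z − t)^{p−1}·(|z|^{r−2}z − |t|^{r−2}t) ≥ C_{r,p}·| |z|^{(r−2)/p}·z − |t|^{(r−2)/p}·t |^p, where C_{r,p} = (r − 1)·(p/(p + r − 2))^p. -/
set_option maxHeartbeats 1000000

open MeasureTheory Real Set

lemma hasDerivAt_abs_rpow_mul {a : ℝ} (ha : 0 ≤ a) (s : ℝ) :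
    HasDerivAt (fun x : ℝ => |x| ^ a * x) ((a + 1) * |s| ^ a) s := by
  rcases lt_trichotomy s 0 with hs | hs | hs
  · -- s < 0 : near s, |x| = -x
    have hns : (0:ℝ) < -s := by linarith
    have h1 : HasDerivAt (fun x : ℝ => (-x) ^ a) (a * (-s) ^ (a - 1) * (-1)) s := by
      have := (Real.hasDerivAt_rpow_const (p := a) (x := -s) (Or.inl hns.ne'))
      exact this.comp s (hasDerivAt_neg s)
    have h2 : HasDerivAt (fun x : ℝ => (-x) ^ a * x)
        ((a * (-s) ^ (a - 1) * (-1)) * s + (-s) ^ a * 1) s := h1.mul (hasDerivAt_id s)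
    have key : (a * (-s) ^ (a - 1) * (-1)) * s + (-s) ^ a * 1 = (a + 1) * |s| ^ a := by
      have h3 : (-s) ^ (a - 1) * (-s) = (-s) ^ a := by
        rw [← Real.rpow_add_one hns.ne']; ring_nf
      have habs : |s| = -s := abs_of_neg hs
      rw [habs]
      nlinarith [h3]
    rw [key] at h2
    refine h2.congr_of_eventuallyEq ?_
    filter_upwards [eventually_lt_nhds hs] with x hx
    rw [abs_of_neg hx]
  · -- s = 0
    subst hs
    rcases eq_or_lt_of_le ha with ha0 | ha0
    · have : (fun x : ℝ => |x| ^ a * x) = fun x : ℝ => x := by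
        funext x; rw [← ha0, Real.rpow_zero, one_mul]
      rw [this]
      simpa [← ha0] using hasDerivAt_id' (0:ℝ)
    · have habs : |(0:ℝ)| ^ a = 0 := by
        rw [abs_zero, Real.zero_rpow ha0.ne']
      rw [habs, mul_zero]
      rw [hasDerivAt_iff_tendsto_slope]
      have hcont : Continuous fun x : ℝ => |x| ^ a :=
        continuous_abs.rpow_const (fun x => Or.inr ha)
      have : Filter.Tendsto (fun x : ℝ => |x| ^ a) (nhdsWithin 0 {(0:ℝ)}ᶜ) (nhds 0) := by
        have := hcont.continuousAt (x := 0)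
        rw [ContinuousAt, habs] at this
        exact this.mono_left nhdsWithin_le_nhds
      refine this.congr' ?_
      filter_upwards [self_mem_nhdsWithin] with x hx
      have hx0 : x ≠ 0 := hx
      simp only [slope_def_field, habs, sub_zero]
      rw [zero_mul, sub_zero, mul_div_assoc, div_self hx0, mul_one]
  · -- 0 < s
    have h1 : HasDerivAt (fun x : ℝ => x ^ (a + 1)) ((a + 1) * s ^ a) s := by
      have := Real.hasDerivAt_rpow_const (p := a + 1) (x := s) (Or.inl hs.ne')
      simpa using this
    have key : (a + 1) * s ^ a = (a + 1) * |s| ^ a := by rw [abs_of_pos hs]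
    rw [key] at h1
    refine h1.congr_of_eventuallyEq ?_
    filter_upwards [eventually_gt_nhds hs] with x hx
    rw [abs_of_pos hx, Real.rpow_add_one hx.ne']

lemma integral_abs_rpow {a : ℝ} (ha : 0 ≤ a) (t z : ℝ) :
    ∫ τ in t..z, |τ| ^ a = (|z| ^ a * z - |t| ^ a * t) / (a + 1) := by
  have ha1 : (0:ℝ) < a + 1 := by linarith
  have hcont : Continuous fun x : ℝ => (a + 1) * |x| ^ a :=
    continuous_const.mul (continuous_abs.rpow_const (fun x => Or.inr ha))
  have h := intervalIntegral.integral_eq_sub_of_hasDerivAt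
    (f := fun x : ℝ => |x| ^ a * x) (f' := fun x => (a + 1) * |x| ^ a)
    (fun x _ => hasDerivAt_abs_rpow_mul ha x) (hcont.intervalIntegrable t z)
  have h2 : ∫ τ in t..z, (a + 1) * |τ| ^ a = (a + 1) * ∫ τ in t..z, |τ| ^ a := by
    simp [intervalIntegral.integral_const_mul]
  rw [h2] at h
  rw [eq_div_iff ha1.ne']
  linarith [h]

theorem stmt5 (p r z t : ℝ) (hp : 2 ≤ p) (hr : 2 ≤ r) (hzt : t ≤ z) :
    (r - 1) * (p / (p + r - 2)) ^ p *
      |(|z| ^ ((r - 2) / p) * z - |t| ^ ((r - 2) / p) * t)| ^ p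
      ≤ (z - t) ^ (p - 1) * (|z| ^ (r - 2) * z - |t| ^ (r - 2) * t) := by
  have hp0 : (0:ℝ) < p := by linarith
  have hp1 : (1:ℝ) < p := by linarith
  have hpr : (0:ℝ) < p + r - 2 := by linarith
  set a : ℝ := (r - 2) / p with ha_def
  have ha : 0 ≤ a := div_nonneg (by linarith) hp0.le
  have hap : a * p = r - 2 := div_mul_cancel₀ _ hp0.ne'
  have ha1 : a + 1 = (p + r - 2) / p := by field_simp [ha_def]; linarith [hap]
  set F : ℝ := ∫ τ in t..z, |τ| ^ a with hF_def
  set G : ℝ := ∫ τ in t..z, |τ| ^ (r - 2) with hG_def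
  have hFval : F = (|z| ^ a * z - |t| ^ a * t) / (a + 1) := integral_abs_rpow ha t z
  have hGval : G = (|z| ^ (r-2) * z - |t| ^ (r-2) * t) / (r - 1) := by
    have := integral_abs_rpow (a := r - 2) (by linarith) t z
    have h3 : r - 2 + 1 = r - 1 := by ring
    rw [hG_def, this, h3]
  have hFnonneg : 0 ≤ F :=
    intervalIntegral.integral_nonneg hzt (fun x _ => Real.rpow_nonneg (abs_nonneg x) a)
  have hGnonneg : 0 ≤ G :=
    intervalIntegral.integral_nonneg hzt (fun x _ => Real.rpow_nonneg (abs_nonneg x) _)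
  have ha1pos : (0:ℝ) < a + 1 := by linarith
  have hA : |z| ^ a * z - |t| ^ a * t = (a + 1) * F := by
    rw [hFval]; field_simp
  have hB : |z| ^ (r-2) * z - |t| ^ (r-2) * t = (r - 1) * G := by
    rw [hGval, mul_div_assoc']
    exact (mul_div_cancel_left₀ _ (by linarith : r - 1 ≠ 0)).symm
  -- Hölder's inequality
  set q : ℝ := p / (p - 1) with hq_def
  have hpq : p.HolderConjugate q := (Real.holderConjugate_iff_eq_conjExponent hp1).mpr hq_def
  set μ : Measure ℝ := volume.restrict (Ioc t z) with hμ_def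
  haveI : IsFiniteMeasure μ := by
    constructor
    rw [hμ_def, Measure.restrict_apply_univ, Real.volume_Ioc]
    exact ENNReal.ofReal_lt_top
  have hcont : Continuous fun x : ℝ => |x| ^ a :=
    continuous_abs.rpow_const (fun x => Or.inr ha)
  have hmem_f : MemLp (fun x : ℝ => |x| ^ a) (ENNReal.ofReal p) μ := by
    refine MemLp.of_bound hcont.aestronglyMeasurable ((|t| + |z|) ^ a) ?_
    rw [hμ_def, ae_restrict_iff' measurableSet_Ioc]
    filter_upwards with x hx
    rw [Real.norm_eq_abs, abs_of_nonneg (Real.rpow_nonneg (abs_nonneg x) a)]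
    refine Real.rpow_le_rpow (abs_nonneg x) ?_ ha
    rcases hx with ⟨h1, h2⟩
    exact abs_le.mpr ⟨by linarith [neg_abs_le t, abs_nonneg z], by linarith [le_abs_self z, abs_nonneg t]⟩
  have hmem_g : MemLp (fun _ : ℝ => (1:ℝ)) (ENNReal.ofReal q) μ := memLp_const 1
  have holder := integral_mul_le_Lp_mul_Lq_of_nonneg (μ := μ) hpq
    (f := fun x : ℝ => |x| ^ a) (g := fun _ => (1:ℝ))
    (Filter.Eventually.of_forall fun x => Real.rpow_nonneg (abs_nonneg x) a)
    (Filter.Eventually.of_forall fun _ => zero_le_one) hmem_f hmem_g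
  simp only [mul_one, one_mul] at holder
  have hone : (fun x : ℝ => (1:ℝ) ^ q) = fun _ : ℝ => (1:ℝ) := by
    funext x; rw [Real.one_rpow]
  have hμInt1 : ∫ _ : ℝ, (1:ℝ) ^ q ∂μ = z - t := by
    rw [hone, hμ_def]
    simp [Real.volume_Ioc, ENNReal.toReal_ofReal (sub_nonneg.mpr hzt), hzt]
  have hpow : ∫ x : ℝ, (|x| ^ a) ^ p ∂μ = G := by
    rw [hG_def, intervalIntegral.integral_of_le hzt, hμ_def]
    refine (setIntegral_congr_fun measurableSet_Ioc (fun x _ => ?_)).symm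
    rw [← Real.rpow_mul (abs_nonneg x), hap]
  have hFeq : ∫ x : ℝ, |x| ^ a ∂μ = F := by
    rw [hF_def, intervalIntegral.integral_of_le hzt, hμ_def]
  rw [hFeq, hpow, hμInt1] at holder
  have hzt0 : 0 ≤ z - t := sub_nonneg.mpr hzt
  have hFp : F ^ p ≤ (z - t) ^ (p - 1) * G := by
    have h1 : F ^ p ≤ (G ^ (1/p) * (z - t) ^ (1/q)) ^ p :=
      Real.rpow_le_rpow hFnonneg holder hp0.le
    have h2 : (G ^ (1/p) * (z - t) ^ (1/q)) ^ p = G * (z - t) ^ (p - 1) := by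
      rw [Real.mul_rpow (Real.rpow_nonneg hGnonneg _) (Real.rpow_nonneg hzt0 _),
        ← Real.rpow_mul hGnonneg, ← Real.rpow_mul hzt0,
        one_div_mul_cancel hp0.ne', Real.rpow_one]
      congr 1
      rw [hq_def]
      field_simp
    rw [h2, mul_comm] at h1
    exact h1
  have hAabs : |(|z| ^ a * z - |t| ^ a * t)| = (a + 1) * F := by
    rw [hA, abs_of_nonneg (mul_nonneg ha1pos.le hFnonneg)]
  rw [hAabs, hB]
  have hc : (p / (p + r - 2)) ^ p * ((a + 1) * F) ^ p = F ^ p := by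
    rw [← Real.mul_rpow (div_nonneg hp0.le hpr.le) (mul_nonneg ha1pos.le hFnonneg)]
    congr 1
    rw [ha1]
    field_simp
  calc (r - 1) * (p / (p + r - 2)) ^ p * ((a + 1) * F) ^ p
      = (r - 1) * ((p / (p + r - 2)) ^ p * ((a + 1) * F) ^ p) := by ring
    _ = (r - 1) * F ^ p := by rw [hc]
    _ ≤ (r - 1) * ((z - t) ^ (p - 1) * G) :=
        mul_le_mul_of_nonneg_left hFp (by linarith)
    _ = (z - t) ^ (p - 1) * ((r - 1) * G) := by ring
end

section
/- Let V and H be real normed spaces with H a Hilbert space, let j : V → H be linear, let ℰ : V → [0,∞] be convex, and define ℰ^H : H → [0,∞] by ℰ^H(u) := inf{ℰ(û) : û ∈ V, j(û) = u} (with inf ∅ = ∞). Let P be applied pointwise and commute with j in the sense that j(û − P(û−v̂)) = j(û) − P(j(û)−j(v̂)) and j(v̂ + P(û−v̂)) = j(v̂) + P(j(û)−j(v̂)) for all û, v̂ ∈ V. If for all û, v̂ ∈ V, ℰ(û − P(û − v̂)) + ℰ(v̂ + P(û − v̂)) ≤ ℰ(û) + ℰ(v̂), then for all u, v ∈ H: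 ℰ^H(u − P(u−v)) + ℰ^H(v + P(u−v)) ≤ ℰ^H(u) + ℰ^H(v). -/
open ENNReal

theorem stmt18 {V H : Type*} [NormedAddCommGroup V] [NormedSpace ℝ V]
    [NormedAddCommGroup H] [InnerProductSpace ℝ H]
    (j : V →ₗ[ℝ] H) (E : V → ℝ≥0∞)
    (hconv : ∀ x y : V, ∀ a b : ℝ, 0 ≤ a → 0 ≤ b → a + b = 1 →
      E (a • x + b • y) ≤ ENNReal.ofReal a * E x + ENNReal.ofReal b * E y)
    (PV : V → V) (PH : H → H)
    (hcomm : ∀ v : V, j (PV v) = PH (j v))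
    (hineq : ∀ uh vh : V, E (uh - PV (uh - vh)) + E (vh + PV (uh - vh)) ≤ E uh + E vh) :
    ∀ u v : H,
      (⨅ (w : V) (_ : j w = u - PH (u - v)), E w) +
        (⨅ (w : V) (_ : j w = v + PH (u - v)), E w)
        ≤ (⨅ (w : V) (_ : j w = u), E w) + (⨅ (w : V) (_ : j w = v), E w) := by
  intro u v
  have h1 : ∀ uh vh : V, j uh = u → j vh = v →
      (⨅ (w : V) (_ : j w = u - PH (u - v)), E w) +
        (⨅ (w : V) (_ : j w = v + PH (u - v)), E w) ≤ E uh + E vh := by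
    intro uh vh hu hv
    have e1 : j (uh - PV (uh - vh)) = u - PH (u - v) := by
      rw [map_sub, hcomm, map_sub, hu, hv]
    have e2 : j (vh + PV (uh - vh)) = v + PH (u - v) := by
      rw [map_add, hcomm, map_sub, hu, hv]
    exact le_trans (add_le_add (iInf₂_le (uh - PV (uh - vh)) e1) (iInf₂_le (vh + PV (uh - vh)) e2)) (hineq uh vh)
  have h2 : (⨅ (w : V) (_ : j w = u), E w) + (⨅ (w : V) (_ : j w = v), E w)
      = ⨅ (uh : V) (_ : j uh = u) (vh : V) (_ : j vh = v), E uh + E vh := by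
    simp_rw [ENNReal.iInf_add, ENNReal.add_iInf]
  rw [h2]
  exact le_iInf₂ fun uh hu => le_iInf₂ fun vh hv => h1 uh vh hu hv
end
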